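/- Let M and N be matroids on disjoint finite ground sets and let M □ N be their free product (bases are sets B with |B| = r(M)+r(N), B ∩ E(M) independent in M, and B ∩ E(N) spanning in N). Then a set F ⊆ E(M) ∪ E(N) with F ≠ E(M) is a cyclic flat of M □ N if and only if either (i) F ⊊ E(M) and F is a cyclic flat of M, or (ii) E(M) ⊊ F and F − E(M) is a cyclic flat of N; moreover E(M) is a cyclic flat of M □ N if and only if E(M) is a cyclic flat of M and ∅ is a cyclic flat of N. -/

import Mathlib

open Matroid Set

variable {α : Type*}

/-- An element that lies in every base of `M`; a coloop. -/
def MCoPaper.Coloop (M : Matroid α) (e : α) : Prop := ∀ B, M.IsBase B → e ∈ B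

/-- A circuit: a minimal dependent subset of the ground set. -/
def MCoPaper.Circuit (M : Matroid α) (C : Set α) : Prop :=
  C ⊆ M.E ∧ ¬ M.Indep C ∧ ∀ x ∈ C, M.Indep (C \ {x})

/-- A cyclic flat: a flat whose restriction has no coloops. -/
def MCoPaper.CyclicFlat (M : Matroid α) (F : Set α) : Prop :=
  M.IsFlat F ∧ ∀ e ∈ F, ¬ MCoPaper.Coloop (M ↾ F) e

/-- The rank of a set: the largest cardinality of an independent subset. -/
noncomputable def MCoPaper.rk (M : Matroid α) (X : Set α) : ℕ :=
  sSup {n | ∃ I, M.Indep I ∧ I ⊆ X ∧ I.ncard = n}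

open MCoPaper Classical in
/-- Mason's β function. -/
noncomputable def MCoPaper.beta [Fintype α] (M : Matroid α) (X : Finset α) : ℤ :=
  (rk M M.E : ℤ) - rk M ↑X -
    ∑ Y ∈ (Finset.univ.filter (fun Y : Finset α => CyclicFlat M ↑Y ∧ X ⊂ Y)).attach,
      MCoPaper.beta M Y.1
  termination_by (Fintype.card α - X.card : ℕ)
  decreasing_by
    have hY := Y.2
    simp only [Finset.mem_filter, Finset.mem_univ, true_and] at hY
    have h1 : X.card < Y.1.card := Finset.card_lt_card hY.2
    have h2 : Y.1.card ≤ Fintype.card α := Y.1.card_le_univ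
    omega

open MCoPaper Classical in
/-- Mason's α function. -/
noncomputable def MCoPaper.alpha [Fintype α] (M : Matroid α) (X : Finset α) : ℤ :=
  ((X.card : ℤ) - rk M ↑X) -
    ∑ F ∈ (Finset.univ.filter (fun F : Finset α => M.IsFlat ↑F ∧ F ⊂ X)).attach,
      MCoPaper.alpha M F.1
  termination_by X.card
  decreasing_by
    have hF := F.2
    simp only [Finset.mem_filter, Finset.mem_univ, true_and] at hF
    exact Finset.card_lt_card hF.2

/-- `A : Fin n → Set α` is a presentation of `M`. -/
def MCoPaper.IsPresentation (M : Matroid α) {n : ℕ} (A : Fin n → Set α) : Prop :=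
  (∀ i, A i ⊆ M.E) ∧
    ∀ I : Set α, M.Indep I ↔ ∃ φ : α → Fin n, Set.InjOn φ I ∧ ∀ x ∈ I, x ∈ A (φ x)

/-- `M` is a transversal matroid. -/
def MCoPaper.Transversal (M : Matroid α) : Prop :=
  ∃ (n : ℕ) (A : Fin n → Set α), MCoPaper.IsPresentation M A

/-- `B` is a fundamental basis of `M`. -/
def MCoPaper.FundBasis (M : Matroid α) (B : Set α) : Prop :=
  M.IsBase B ∧ ∀ F, MCoPaper.CyclicFlat M F → F ⊆ M.closure (B ∩ F)

/-- `M` is a fundamental transversal matroid. -/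
def MCoPaper.FundTransversal (M : Matroid α) : Prop :=
  ∃ B, MCoPaper.FundBasis M B

open MCoPaper

/-!
The independent sets of the free product `P = M □ N` are the sets `I` with `I ∩ E(M)`
independent in `M` and `|I| ≤ r(M) + r_N(I ∩ E(N))`. Hence `P | E(M) = M` and `P / E(M) = N`,
which transfers flatness and coloops for sets comparable with `E(M)`. Call `I` tight when equality
holds: every element of `E(M)` then lies in the closure of `I`. A basis of a cyclic flat `F`
that avoids some `y ∈ F - E(M)` is tight, so `E(M) ⊆ F`; thus no cyclic flat is incomparable
with `E(M)`. Conversely, when `F - E(M)` is a nonempty cyclic flat of `N`, an element `e` of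
`E(M)` can be traded for an element of `F - E(M)` outside a basis of `N | (F - E(M))`, giving a
tight set in `F - e`, so `e` is not a coloop of `P | F`.
-/

namespace MCoPaper

variable {M N P : Matroid α} {A I K X Y B F : Set α} {e : α}

lemma ncard_inter_add_ncard_inter [Finite α] {S T : Set α} (hST : Disjoint S T)
    (hX : X ⊆ S ∪ T) : (X ∩ S).ncard + (X ∩ T).ncard = X.ncard := by
  rw [← ncard_union_eq (hST.mono inter_subset_right inter_subset_right),
    ← inter_union_distrib_left, inter_eq_self_of_subset_left hX]

lemma union_inter_eq_left_of_disjoint {S T : Set α} (hST : Disjoint S T) (hA : A ⊆ S)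
    (hK : K ⊆ T) : (A ∪ K) ∩ S = A := by
  rw [union_inter_distrib_right, inter_eq_self_of_subset_left hA,
    (hST.symm.mono_left hK).inter_eq, union_empty]

lemma union_inter_eq_right_of_disjoint {S T : Set α} (hST : Disjoint S T) (hA : A ⊆ S)
    (hK : K ⊆ T) : (A ∪ K) ∩ T = K := by
  rw [union_comm, union_inter_eq_left_of_disjoint hST.symm hK hA]

section Rank

variable [Finite α]

lemma rk_bddAbove (M : Matroid α) (X : Set α) :
    BddAbove {n | ∃ I, M.Indep I ∧ I ⊆ X ∧ I.ncard = n} :=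
  ⟨X.ncard, by rintro _ ⟨I, -, hIX, rfl⟩; exact ncard_le_ncard hIX⟩

lemma _root_.Matroid.Indep.ncard_le_rk (hI : M.Indep I) (hIX : I ⊆ X) : I.ncard ≤ rk M X :=
  le_csSup (rk_bddAbove M X) ⟨I, hI, hIX, rfl⟩

lemma _root_.Matroid.IsBasis'.rk_eq_ncard (hI : M.IsBasis' I X) : rk M X = I.ncard := by
  refine le_antisymm (csSup_le ⟨0, ∅, M.empty_indep, empty_subset X, ncard_empty α⟩ ?_)
    (hI.indep.ncard_le_rk hI.subset)
  rintro _ ⟨J, hJ, hJX, rfl⟩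
  obtain ⟨K, hK, hJK⟩ := hJ.subset_isBasis'_of_subset hJX
  rw [ncard_def I, ← hK.encard_eq_encard hI, ← ncard_def]
  exact ncard_le_ncard hJK

lemma _root_.Matroid.IsBasis.rk_eq_ncard (hI : M.IsBasis I X) : rk M X = I.ncard :=
  hI.isBasis'.rk_eq_ncard

lemma _root_.Matroid.Indep.rk_eq_ncard (hI : M.Indep I) : rk M I = I.ncard :=
  hI.isBasis_self.rk_eq_ncard

lemma _root_.Matroid.IsBase.rk_ground_eq (hB : M.IsBase B) : rk M M.E = B.ncard :=
  hB.isBasis_ground.rk_eq_ncard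

lemma rk_empty (M : Matroid α) : rk M ∅ = 0 := by
  simpa using M.empty_indep.rk_eq_ncard

lemma rk_mono (hXY : X ⊆ Y) : rk M X ≤ rk M Y := by
  obtain ⟨I, hI⟩ := M.exists_isBasis' X
  rw [hI.rk_eq_ncard]
  exact hI.indep.ncard_le_rk (hI.subset.trans hXY)

lemma indep_of_ncard_le_rk (h : I.ncard ≤ rk M I) : M.Indep I := by
  obtain ⟨J, hJ⟩ := M.exists_isBasis' I
  rw [hJ.rk_eq_ncard] at h
  rw [← eq_of_subset_of_ncard_le hJ.subset h]
  exact hJ.indep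

lemma rk_add_ncard_le_of_subset (hYX : Y ⊆ X) : rk M X + Y.ncard ≤ rk M Y + X.ncard := by
  obtain ⟨I, hI⟩ := M.exists_isBasis' X
  have hIY : (I ∩ Y).ncard ≤ rk M Y :=
    (hI.indep.subset inter_subset_left).ncard_le_rk inter_subset_right
  have hIX : (I \ Y).ncard ≤ (X \ Y).ncard := ncard_le_ncard (sdiff_subset_sdiff_left hI.subset)
  have := ncard_inter_add_ncard_sdiff_eq_ncard I Y
  have := ncard_sdiff_add_ncard_of_subset hYX
  rw [hI.rk_eq_ncard]
  omega

lemma rk_eq_rk_ground_of_subset_closure (hX : M.E ⊆ M.closure X) : rk M X = rk M M.E := by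
  obtain ⟨I, hI⟩ := M.exists_isBasis' X
  have hIB : M.IsBase I :=
    hI.indep.isBase_of_ground_subset_closure (hI.closure_eq_closure ▸ hX)
  rw [hI.rk_eq_ncard, hIB.rk_ground_eq]

lemma exists_isBase_ncard_union_add_rk_le (M : Matroid α) (X : Set α) :
    ∃ B, M.IsBase B ∧ (B ∪ X).ncard + rk M X ≤ rk M M.E + X.ncard := by
  obtain ⟨J, hJ⟩ := M.exists_isBasis' X
  obtain ⟨B, hB, hJB⟩ := hJ.indep.exists_isBase_superset
  refine ⟨B, hB, ?_⟩
  have hBX : (B ∪ X).ncard ≤ (B ∪ (X \ J)).ncard := ncard_le_ncard (by tauto_set)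
  have := ncard_union_le B (X \ J)
  have := ncard_sdiff_add_ncard_of_subset hJ.subset
  rw [hB.rk_ground_eq, hJ.rk_eq_ncard]
  omega

lemma _root_.Matroid.IsFlat.rk_lt_rk_ground (hF : M.IsFlat F) (hFE : F ≠ M.E) :
    rk M F < rk M M.E := by
  obtain ⟨I, hI⟩ := M.exists_isBasis F hF.subset_ground
  obtain ⟨B, hB, hIB⟩ := hI.indep.exists_isBase_superset
  have hne : I ≠ B := by
    rintro rfl
    exact hFE (by rw [← hF.closure, ← hI.closure_eq_closure, hB.closure_eq])
  rw [hI.rk_eq_ncard, hB.rk_ground_eq]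
  exact ncard_lt_ncard (hIB.ssubset_of_ne hne)

end Rank

lemma coloop_iff_isColoop : Coloop M e ↔ M.IsColoop e := by
  rw [isColoop_iff_forall_mem_isBase]
  rfl

lemma cyclicFlat_iff : CyclicFlat M F ↔ M.IsFlat F ∧ ∀ e ∈ F, ¬ (M ↾ F).IsColoop e := by
  simp only [CyclicFlat, coloop_iff_isColoop]

/-- `P` is the free product `M □ N`, described through its bases. -/
structure IsFreeProduct (M N P : Matroid α) : Prop where
  disjoint : Disjoint M.E N.E
  ground_eq : P.E = M.E ∪ N.E
  isBase_iff : ∀ B, P.IsBase B ↔ B ⊆ M.E ∪ N.E ∧ B.ncard = rk M M.E + rk N N.E ∧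
    M.Indep (B ∩ M.E) ∧ N.E ⊆ N.closure (B ∩ N.E)

namespace IsFreeProduct

variable (h : IsFreeProduct M N P)
include h

lemma ground_left_subset : M.E ⊆ P.E :=
  h.ground_eq ▸ subset_union_left

variable [Finite α]

/- Pad `I ∩ N.E` to a spanning set `S` of `N` of the same nullity, and `I ∩ M.E` to an
independent set `A` of `M` with `|A| + |S| = r(M) + r(N)`; then `A ∪ S` is a base. -/
lemma indep_of_ncard_le (hIE : I ⊆ M.E ∪ N.E) (hIM : M.Indep (I ∩ M.E))
    (hI : I.ncard ≤ rk M M.E + rk N (I ∩ N.E)) : P.Indep I := by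
  obtain ⟨Bn, hBn, hS⟩ := exists_isBase_ncard_union_add_rk_le N (I ∩ N.E)
  set S := Bn ∪ (I ∩ N.E)
  have hSN : S ⊆ N.E := union_subset hBn.subset_ground inter_subset_right
  have hBnS : Bn.ncard ≤ S.ncard := ncard_le_ncard subset_union_left
  obtain ⟨Bm, hBm, hIBm⟩ := hIM.exists_isBase_superset
  have := ncard_inter_add_ncard_inter h.disjoint hIE
  obtain ⟨A, hIA, hABm, hA⟩ := exists_subsuperset_card_eq hIBm
    (n := rk M M.E + rk N N.E - S.ncard) (by omega)
    (by rw [← hBm.rk_ground_eq, hBn.rk_ground_eq]; omega)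
  have hAM : A ⊆ M.E := hABm.trans hBm.subset_ground
  have hAS := union_inter_eq_left_of_disjoint h.disjoint hAM hSN
  have hSA := union_inter_eq_right_of_disjoint h.disjoint hAM hSN
  have hbase : P.IsBase (A ∪ S) := by
    refine (h.isBase_iff _).2 ⟨union_subset_union hAM hSN, ?_, ?_, ?_⟩
    · have := ncard_inter_add_ncard_inter h.disjoint (union_subset_union hAM hSN)
      rw [hAS, hSA] at this
      omega
    · rw [hAS]; exact hBm.indep.subset hABm
    · rw [hSA, ← hBn.closure_eq]; exact N.closure_subset_closure subset_union_left
  refine hbase.indep.subset fun x hx => ?_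
  rcases hIE hx with hxM | hxN
  · exact Or.inl (hIA ⟨hx, hxM⟩)
  · exact Or.inr (Or.inr ⟨hx, hxN⟩)

lemma indep_iff : P.Indep I ↔
    I ⊆ M.E ∪ N.E ∧ M.Indep (I ∩ M.E) ∧ I.ncard ≤ rk M M.E + rk N (I ∩ N.E) := by
  refine ⟨fun hI => ?_, fun ⟨hIE, hIM, hI⟩ => h.indep_of_ncard_le hIE hIM hI⟩
  obtain ⟨B, hB, hIB⟩ := hI.exists_isBase_superset
  obtain ⟨hBE, hBcard, hBM, hBN⟩ := (h.isBase_iff B).1 hB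
  have hIE := hIB.trans hBE
  refine ⟨hIE, hBM.subset (inter_subset_inter_left _ hIB), ?_⟩
  have hN := rk_add_ncard_le_of_subset (M := N) (inter_subset_inter_left N.E hIB)
  rw [rk_eq_rk_ground_of_subset_closure hBN] at hN
  have := ncard_le_ncard (inter_subset_inter_left M.E hIB)
  have := ncard_inter_add_ncard_inter h.disjoint hBE
  have := ncard_inter_add_ncard_inter h.disjoint hIE
  omega

lemma indep_union_iff (hA : A ⊆ M.E) (hK : K ⊆ N.E) :
    P.Indep (A ∪ K) ↔ M.Indep A ∧ A.ncard + K.ncard ≤ rk M M.E + rk N K := by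
  rw [h.indep_iff, union_inter_eq_left_of_disjoint h.disjoint hA hK,
    union_inter_eq_right_of_disjoint h.disjoint hA hK,
    ncard_union_eq (h.disjoint.mono hA hK), and_iff_right (union_subset_union hA hK)]

lemma restrict_ground_left : P ↾ M.E = M := by
  refine ext_indep rfl fun I (hI : I ⊆ M.E) => ?_
  have hPI := h.indep_union_iff hI (empty_subset N.E)
  rw [union_empty, rk_empty, ncard_empty, add_zero, add_zero] at hPI
  rw [restrict_indep_iff, and_iff_left hI, hPI, and_iff_left_iff_imp]
  exact fun hI' => hI'.ncard_le_rk hI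

lemma restrict_eq_of_subset_left (hF : F ⊆ M.E) : P ↾ F = M ↾ F := by
  rw [← h.restrict_ground_left, restrict_restrict_eq _ hF]

lemma contract_ground_left : P ／ M.E = N := by
  have hE : (P ／ M.E).E = N.E := by
    rw [contract_ground, h.ground_eq, union_sdiff_left, h.disjoint.sdiff_eq_right]
  refine ext_indep hE fun I hI => ?_
  rw [hE] at hI
  obtain ⟨B, hB⟩ := M.exists_isBase
  have hPB : P.IsBasis B M.E := by
    rw [← isBase_restrict_iff h.ground_left_subset, h.restrict_ground_left]
    exact hB
  rw [hPB.contract_indep_iff, union_comm, h.indep_union_iff hB.subset_ground hI,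
    hB.rk_ground_eq, and_iff_right hB.indep, and_iff_left (h.disjoint.mono_right hI)]
  exact ⟨fun hle => indep_of_ncard_le_rk (by omega), fun hI' => by rw [hI'.rk_eq_ncard]⟩

lemma closure_inter_ground_left (hX : X ⊆ M.E) : P.closure X ∩ M.E = M.closure X := by
  rw [← restrict_closure_eq P hX h.ground_left_subset, h.restrict_ground_left]

lemma isFlat_iff_of_subset_left (hF : F ⊆ M.E) (hne : F ≠ M.E) : P.IsFlat F ↔ M.IsFlat F := by
  rw [isFlat_iff_closure_eq, isFlat_iff_closure_eq, ← h.closure_inter_ground_left hF]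
  refine ⟨fun hP => by rw [hP, inter_eq_self_of_subset_left hF], fun hM => ?_⟩
  refine (P.subset_closure F (hF.trans h.ground_left_subset)).antisymm' fun e he => ?_
  rcases h.ground_eq ▸ P.closure_subset_ground F he with heM | heN
  · exact hM ▸ ⟨he, heM⟩
  exfalso
  have hMF : M.IsFlat F := by rwa [isFlat_iff_closure_eq, ← h.closure_inter_ground_left hF]
  obtain ⟨I, hI⟩ := M.exists_isBasis F hF
  have hPI : P.IsBasis I F := by
    rw [← h.restrict_ground_left, isBasis_restrict_iff h.ground_left_subset] at hI
    exact hI.1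
  have heI : e ∉ I := fun heI => h.disjoint.notMem_of_mem_left (hI.indep.subset_ground heI) heN
  rw [← hPI.closure_eq_closure, hPI.indep.mem_closure_iff_of_notMem heI, ← union_singleton,
    dep_iff, h.indep_union_iff hI.indep.subset_ground (singleton_subset_iff.2 heN)] at he
  have hlt := hMF.rk_lt_rk_ground hne
  rw [hI.rk_eq_ncard] at hlt
  exact he.1 ⟨hI.indep, by rw [ncard_singleton]; omega⟩

lemma isFlat_iff_of_superset_left (hMF : M.E ⊆ F) (hF : F ⊆ P.E) :
    P.IsFlat F ↔ N.IsFlat (F \ M.E) := by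
  rw [isFlat_iff_closure_eq, isFlat_iff_closure_eq, ← h.contract_ground_left, contract_closure_eq,
    sdiff_union_of_subset hMF]
  have hFcl := P.subset_closure F hF
  refine ⟨fun hP => by rw [hP], fun hP => ?_⟩
  rw [← sdiff_union_of_subset (hMF.trans hFcl), hP, sdiff_union_of_subset hMF]

lemma isColoop_restrict_iff_of_notMem_left (hMF : M.E ⊆ F) (he : e ∉ M.E) :
    (P ↾ F).IsColoop e ↔ (N ↾ (F \ M.E)).IsColoop e := by
  rw [← h.contract_ground_left, ← restrict_contract_eq_contract_restrict _ hMF,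
    contract_isColoop_iff, and_iff_left he]

lemma ground_left_subset_closure (hI : P.Indep I)
    (hcard : rk M M.E + rk N (I ∩ N.E) ≤ I.ncard) : M.E ⊆ P.closure I := by
  intro x hx
  by_cases hxI : x ∈ I
  · exact P.subset_closure I hI.subset_ground hxI
  rw [hI.mem_closure_iff_of_notMem hxI, dep_iff, h.indep_iff,
    insert_inter_of_notMem (h.disjoint.notMem_of_mem_left hx), ncard_insert_of_notMem hxI]
  exact ⟨fun hx' => by omega, insert_subset (h.ground_left_subset hx) hI.subset_ground⟩

lemma ground_left_subset_closure_union (hA : M.Indep A) (hK : K ⊆ N.E)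
    (hcard : A.ncard + K.ncard = rk M M.E + rk N K) : M.E ⊆ P.closure (A ∪ K) := by
  have hAK := h.indep_union_iff hA.subset_ground hK
  refine h.ground_left_subset_closure (hAK.2 ⟨hA, hcard.le⟩) ?_
  rw [union_inter_eq_right_of_disjoint h.disjoint hA.subset_ground hK,
    ncard_union_eq (h.disjoint.mono hA.subset_ground hK)]
  exact hcard.ge

lemma not_isColoop_restrict_of_mem_left (hMF : M.E ⊂ F) (hF : F ⊆ P.E)
    (hN : ∀ x ∈ F \ M.E, ¬ (N ↾ (F \ M.E)).IsColoop x) (he : e ∈ M.E) :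
    ¬ (P ↾ F).IsColoop e := by
  rw [restrict_isColoop_iff hF]
  rintro ⟨hcl, -⟩
  refine hcl ?_
  have hGN : F \ M.E ⊆ N.E := fun x hx => (h.ground_eq ▸ hF hx.1).resolve_left hx.2
  have hGF : F \ M.E ⊆ F \ {e} := fun x hx => ⟨hx.1, fun hxe => hx.2 (hxe ▸ he)⟩
  obtain ⟨x, hxG⟩ := nonempty_of_ssubset hMF
  obtain ⟨J, hJ, hxJ⟩ : ∃ J, (N ↾ (F \ M.E)).IsBase J ∧ x ∉ J := by
    simpa [isColoop_iff_forall_mem_isBase] using hN x hxG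
  rw [isBase_restrict_iff hGN] at hJ
  obtain ⟨B, hB⟩ := M.exists_isBase
  have hBF : B ⊆ F := hB.subset_ground.trans hMF.subset
  by_cases heB : e ∈ B
  · have hrk : rk N (insert x J) = J.ncard := le_antisymm
      (hJ.rk_eq_ncard ▸ rk_mono (insert_subset hxG hJ.subset))
      (hJ.indep.rk_eq_ncard ▸ rk_mono (subset_insert x J))
    have hBe : (B \ {e}).ncard + 1 = rk M M.E :=
      hB.rk_ground_eq ▸ ncard_sdiff_singleton_add_one heB
    refine P.closure_subset_closure ?_ (h.ground_left_subset_closure_union (A := B \ {e})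
      (hB.indep.subset sdiff_subset) (insert_subset (hGN hxG) hJ.indep.subset_ground)
      (by rw [hrk, ncard_insert_of_notMem hxJ]; omega) he)
    exact union_subset (sdiff_subset_sdiff_left hBF)
      (insert_subset (hGF hxG) (hJ.subset.trans hGF))
  · refine P.closure_subset_closure ?_ (h.ground_left_subset_closure_union hB.indep
      hJ.indep.subset_ground (by rw [hJ.indep.rk_eq_ncard, hB.rk_ground_eq]) he)
    exact union_subset (subset_sdiff_singleton hBF heB) (hJ.subset.trans hGF)

lemma subset_or_superset_of_cyclicFlat (hF : CyclicFlat P F) : F ⊆ M.E ∨ M.E ⊆ F := by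
  obtain ⟨hF, hcyc⟩ := cyclicFlat_iff.1 hF
  refine or_iff_not_imp_left.2 fun hFM => ?_
  obtain ⟨y, hyF, hyM⟩ := not_subset.1 hFM
  have hyN : y ∈ N.E := (h.ground_eq ▸ hF.subset_ground hyF).resolve_left hyM
  obtain ⟨I, hIF, hyI⟩ : ∃ I, (P ↾ F).IsBase I ∧ y ∉ I := by
    simpa [isColoop_iff_forall_mem_isBase] using hcyc y hyF
  rw [isBase_restrict_iff hF.subset_ground] at hIF
  obtain ⟨hIE, hIM, -⟩ := h.indep_iff.1 hIF.indep
  have hdep := (hIF.indep.mem_closure_iff_of_notMem hyI).1 (hIF.subset_closure hyF)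
  rw [dep_iff, h.indep_iff, insert_inter_of_notMem hyM, insert_inter_of_mem hyN,
    ncard_insert_of_notMem hyI] at hdep
  have hmono := rk_mono (M := N) (subset_insert y (I ∩ N.E))
  have htight : rk M M.E + rk N (I ∩ N.E) ≤ I.ncard := by
    by_contra! hlt
    exact hdep.1 ⟨insert_subset (Or.inr hyN) hIE, hIM, by omega⟩
  rw [← hF.closure, ← hIF.closure_eq_closure]
  exact h.ground_left_subset_closure hIF.indep htight

lemma cyclicFlat_iff_of_subset_left (hF : F ⊆ M.E) (hne : F ≠ M.E) :
    CyclicFlat P F ↔ CyclicFlat M F := by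
  rw [cyclicFlat_iff, cyclicFlat_iff, h.isFlat_iff_of_subset_left hF hne,
    h.restrict_eq_of_subset_left hF]

lemma cyclicFlat_iff_of_ssuperset_left (hMF : M.E ⊂ F) (hF : F ⊆ P.E) :
    CyclicFlat P F ↔ CyclicFlat N (F \ M.E) := by
  rw [cyclicFlat_iff, cyclicFlat_iff, h.isFlat_iff_of_superset_left hMF.subset hF]
  refine and_congr_right fun _ => ⟨fun hP e he => ?_, fun hN e he => ?_⟩
  · rw [← h.isColoop_restrict_iff_of_notMem_left hMF.subset he.2]
    exact hP e he.1
  · by_cases heM : e ∈ M.E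
    · exact h.not_isColoop_restrict_of_mem_left hMF hF hN heM
    · rw [h.isColoop_restrict_iff_of_notMem_left hMF.subset heM]
      exact hN e ⟨he, heM⟩

lemma cyclicFlat_ground_left_iff : CyclicFlat P M.E ↔ CyclicFlat M M.E ∧ CyclicFlat N ∅ := by
  rw [cyclicFlat_iff, cyclicFlat_iff, cyclicFlat_iff,
    h.isFlat_iff_of_superset_left subset_rfl h.ground_left_subset, sdiff_self,
    h.restrict_eq_of_subset_left subset_rfl]
  simp only [M.ground_isFlat, true_and, mem_empty_iff_false, IsEmpty.forall_iff, implies_true,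
    and_true]
  exact and_comm

end IsFreeProduct

end MCoPaper

theorem stmt19 [Fintype α] (M N P : Matroid α) (hdisj : Disjoint M.E N.E)
    (hE : P.E = M.E ∪ N.E)
    (hbase : ∀ B : Set α, P.IsBase B ↔
      (B ⊆ M.E ∪ N.E ∧ B.ncard = rk M M.E + rk N N.E ∧
        M.Indep (B ∩ M.E) ∧ N.E ⊆ N.closure (B ∩ N.E))) :
    (∀ F : Set α, F ⊆ M.E ∪ N.E → F ≠ M.E →
      (CyclicFlat P F ↔
        ((F ⊂ M.E ∧ CyclicFlat M F) ∨ (M.E ⊂ F ∧ CyclicFlat N (F \ M.E))))) ∧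
    (CyclicFlat P M.E ↔ (CyclicFlat M M.E ∧ CyclicFlat N ∅)) := by
  have h : IsFreeProduct M N P := ⟨hdisj, hE, hbase⟩
  refine ⟨fun F hFE hne => ⟨fun hF => ?_, ?_⟩, h.cyclicFlat_ground_left_iff⟩
  · rcases h.subset_or_superset_of_cyclicFlat hF with hFM | hMF
    · exact Or.inl ⟨hFM.ssubset_of_ne hne, (h.cyclicFlat_iff_of_subset_left hFM hne).1 hF⟩
    · have hMF' := hMF.ssubset_of_ne (Ne.symm hne)
      exact Or.inr ⟨hMF', (h.cyclicFlat_iff_of_ssuperset_left hMF' (hE ▸ hFE)).1 hF⟩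
  · rintro (⟨hFM, hMF⟩ | ⟨hMF, hNF⟩)
    · exact (h.cyclicFlat_iff_of_subset_left hFM.subset hne).2 hMF
    · exact (h.cyclicFlat_iff_of_ssuperset_left hMF (hE ▸ hFE)).2 hNF
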